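/- Let g̃ = sl(n+3,ℝ) act on ℝ^{n+3} ⊕ ℝ^{(n+3)*} by the standard and dual (negative transpose) representations, and let w̃₀ = ((0,0,−1,0ⁿ)ᵗ, (0,1,−1,0ⁿ)). Then the annihilator Ann_{g̃}(w̃₀) = {A ∈ g̃ : A·(0,0,−1,0ⁿ)ᵗ = 0 and (0,1,−1,0ⁿ)·A = 0} equals i'(sl(n+2,ℝ)), the image of the Lie algebra embedding i'. -/

import Mathlib

open Matrix

def femIdx (n : ℕ) : Fin (n + 3) → Fin (n + 2) := fun r =>
  if _ : r.val < 2 then ⟨r.val, by omega⟩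
  else if _ : r.val = 2 then ⟨1, by omega⟩
  else ⟨r.val - 1, by have := r.isLt; omega⟩

def iPrimeMat (n : ℕ) (X : Matrix (Fin (n + 2)) (Fin (n + 2)) ℝ) :
    Matrix (Fin (n + 3)) (Fin (n + 3)) ℝ :=
  Matrix.of fun r s =>
    if s.val = 2 then (0 : ℝ) else X (femIdx n r) (femIdx n s)

def muVec (n : ℕ) : Fin (n + 3) → ℝ := fun r => if r.val = 2 then -1 else 0

def nuVec (n : ℕ) : Fin (n + 3) → ℝ := fun r =>
  if r.val = 1 then 1 else if r.val = 2 then -1 else 0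

def embIdx (n : ℕ) : Fin (n + 2) → Fin (n + 3) := fun k =>
  if _ : k.val < 2 then ⟨k.val, by omega⟩ else ⟨k.val + 1, by omega⟩

lemma femIdx_val (n : ℕ) (r : Fin (n + 3)) :
    (femIdx n r).val = if r.val < 2 then r.val else if r.val = 2 then 1 else r.val - 1 := by
  simp only [femIdx]; split_ifs <;> rfl

lemma embIdx_val (n : ℕ) (i : Fin (n + 2)) :
    (embIdx n i).val = if i.val < 2 then i.val else i.val + 1 := by
  simp only [embIdx]; split_ifs <;> rfl

lemma femIdx_embIdx (n : ℕ) (i : Fin (n + 2)) : femIdx n (embIdx n i) = i := by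
  apply Fin.ext
  rw [femIdx_val, embIdx_val]
  split_ifs <;> omega

lemma embIdx_femIdx (n : ℕ) (r : Fin (n + 3)) (hr : r.val ≠ 2) :
    embIdx n (femIdx n r) = r := by
  apply Fin.ext
  rw [embIdx_val, femIdx_val]
  have := r.isLt
  split_ifs <;> omega

lemma embIdx_ne_two (n : ℕ) (i : Fin (n + 2)) : (embIdx n i).val ≠ 2 := by
  rw [embIdx_val]; split_ifs <;> omega

lemma muVec_eq (n : ℕ) :
    muVec n = -Pi.single (⟨2, by omega⟩ : Fin (n + 3)) (1 : ℝ) := by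
  funext r
  simp only [muVec, Pi.neg_apply, Pi.single_apply, Fin.ext_iff]
  split_ifs <;> simp

lemma nuVec_eq (n : ℕ) :
    nuVec n = Pi.single (⟨1, by omega⟩ : Fin (n + 3)) (1 : ℝ)
      - Pi.single (⟨2, by omega⟩ : Fin (n + 3)) (1 : ℝ) := by
  funext r
  simp only [nuVec, Pi.sub_apply, Pi.single_apply, Fin.ext_iff]
  split_ifs <;> simp_all

lemma trace_iPrimeMat (n : ℕ) (X : Matrix (Fin (n + 2)) (Fin (n + 2)) ℝ) :
    (iPrimeMat n X).trace = X.trace := by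
  simp only [Matrix.trace, Matrix.diag, iPrimeMat, Matrix.of_apply]
  rw [show (∑ r : Fin (n + 3), if r.val = 2 then (0:ℝ) else X (femIdx n r) (femIdx n r))
      = ∑ r ∈ Finset.univ.filter (fun r : Fin (n+3) => ¬ r.val = 2),
          X (femIdx n r) (femIdx n r) by
    rw [Finset.sum_filter]
    exact Finset.sum_congr rfl fun r _ => by split_ifs <;> simp_all]
  refine Finset.sum_nbij' (fun r => femIdx n r) (fun i => embIdx n i) ?_ ?_ ?_ ?_ ?_
  · intro r _; exact Finset.mem_univ _
  · intro i _; simp [embIdx_ne_two n i]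
  · intro r hr
    exact embIdx_femIdx n r (by simpa using (Finset.mem_filter.mp hr).2)
  · intro i _; exact femIdx_embIdx n i
  · intro r _; rfl

/-- The annihilator in `g̃ = sl(n+3,ℝ)` of `w̃₀ = ((0,0,−1,0ⁿ)ᵗ, (0,1,−1,0ⁿ))`, i.e.
`{A ∈ g̃ : A·(0,0,−1,0ⁿ)ᵗ = 0 and (0,1,−1,0ⁿ)·A = 0}`, equals `i'(sl(n+2,ℝ))`. -/
theorem stmt10 (n : ℕ) (A : Matrix (Fin (n + 3)) (Fin (n + 3)) ℝ) (hA : A.trace = 0) :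
    (A.mulVec (muVec n) = 0 ∧ Matrix.vecMul (nuVec n) A = 0) ↔
    ∃ X : Matrix (Fin (n + 2)) (Fin (n + 2)) ℝ, X.trace = 0 ∧ A = iPrimeMat n X := by
  constructor
  · rintro ⟨hmu, hnu⟩
    have hcol : ∀ r, A r ⟨2, by omega⟩ = 0 := by
      intro r
      have := congrFun hmu r
      rw [muVec_eq] at this
      simpa [Matrix.mulVec_neg, neg_eq_zero] using this
    have hrow : ∀ s, A ⟨1, by omega⟩ s = A ⟨2, by omega⟩ s := by
      intro s
      have := congrFun hnu s
      rw [nuVec_eq, Matrix.sub_vecMul, Matrix.single_one_vecMul,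
        Matrix.single_one_vecMul] at this
      simpa [sub_eq_zero] using this
    refine ⟨fun i j => A (embIdx n i) (embIdx n j), ?_, ?_⟩
    case refine_2 =>
      ext r s
      simp only [iPrimeMat, Matrix.of_apply]
      split_ifs with hs
      · obtain ⟨sv, hsv⟩ := s
        simp only at hs
        subst hs
        exact hcol r
      · rw [embIdx_femIdx n s hs]
        obtain ⟨rv, hrv⟩ := r
        by_cases hr : rv = 2
        · subst hr
          have e1 : embIdx n (femIdx n (⟨2, hrv⟩ : Fin (n+3))) = ⟨1, by omega⟩ := by
            apply Fin.ext
            rw [embIdx_val, femIdx_val]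
            norm_num
          rw [e1]
          exact (hrow s).symm
        · rw [embIdx_femIdx n ⟨rv, hrv⟩ hr]
    case refine_1 =>
      have h2 : A = iPrimeMat n (fun i j => A (embIdx n i) (embIdx n j)) := by
        ext r s
        simp only [iPrimeMat, Matrix.of_apply]
        split_ifs with hs
        · obtain ⟨sv, hsv⟩ := s
          simp only at hs
          subst hs
          exact hcol r
        · rw [embIdx_femIdx n s hs]
          obtain ⟨rv, hrv⟩ := r
          by_cases hr : rv = 2
          · subst hr
            have e1 : embIdx n (femIdx n (⟨2, hrv⟩ : Fin (n+3))) = ⟨1, by omega⟩ := by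
              apply Fin.ext
              rw [embIdx_val, femIdx_val]
              norm_num
            rw [e1]
            exact (hrow s).symm
          · rw [embIdx_femIdx n ⟨rv, hrv⟩ hr]
      have h3 := trace_iPrimeMat n (fun i j => A (embIdx n i) (embIdx n j))
      rw [← h2] at h3
      exact h3.symm.trans hA
  · rintro ⟨X, hXtr, rfl⟩
    constructor
    · funext r
      simp only [Matrix.mulVec, dotProduct, muVec, iPrimeMat, Matrix.of_apply, Pi.zero_apply]
      refine Finset.sum_eq_zero fun s _ => ?_
      split_ifs <;> simp
    · rw [nuVec_eq, Matrix.sub_vecMul, Matrix.single_one_vecMul, Matrix.single_one_vecMul]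
      funext s
      simp [iPrimeMat, femIdx]
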